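/- For all integers N ≥ 0 and ℓ ≥ 0 and all real numbers x > 0 and y > 0, one has A_N^ℓ(x,y) > 0. -/

import Mathlib

/-- The tridiagonal matrix `M_ℓ^{(N)}(x)` over `ℝ` (1-based indices): diagonal entries
`(N+i)(x-ℓ+2i-1)`, superdiagonal entries `N+i`, subdiagonal entries
`(M)_{i+1,i} = -(N+i+1)·i·(ℓ-i)`. -/
def Mmat (N ℓ : ℕ) (x : ℝ) : Matrix (Fin ℓ) (Fin ℓ) ℝ :=
  Matrix.of fun i j =>
    if (i : ℕ) = (j : ℕ) then
      ((N : ℝ) + (i : ℕ) + 1) * (x - (ℓ : ℝ) + 2 * ((i : ℕ) + 1) - 1)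
    else if (j : ℕ) = (i : ℕ) + 1 then (N : ℝ) + (i : ℕ) + 1
    else if (i : ℕ) = (j : ℕ) + 1 then
      -(((N : ℝ) + (j : ℕ) + 2) * ((j : ℕ) + 1 : ℝ) * ((ℓ : ℝ) - ((j : ℕ) + 1)))
    else 0

/-- The value `A_N^ℓ(x,y) = det(y·I_ℓ + M_ℓ^{(N)}(x))`. -/
def APoly (N ℓ : ℕ) (x y : ℝ) : ℝ :=
  (y • (1 : Matrix (Fin ℓ) (Fin ℓ) ℝ) + Mmat N ℓ x).det

/-!
Conjugating by `exp S`, with `S` the nilpotent shift matrix, replaces `M` by a tridiagonal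
matrix `M̃` with the same subdiagonal, and `M̃ = T * L` where `T` is upper bidiagonal with
diagonal `N + 1 + i` and superdiagonal `-1`, and `L` is lower bidiagonal with diagonal `x` and
nonpositive subdiagonal. Hence `A_N^ℓ(x, y) = det T * det (L + y • T⁻¹)`. The inverse `T⁻¹`
is positive on and above the diagonal, so for `x > 0 ≤ y` the matrix `L + y • T⁻¹` is upper
Hessenberg with positive diagonal, nonnegative upper part and nonpositive subdiagonal. Clearing
its first subdiagonal entry adds a nonnegative multiple of the first row to the second, which
preserves this sign pattern on the remaining block, so its determinant is positive by induction.
-/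

open Matrix Finset

namespace Matrix

structure IsSignedHessenberg {R : Type*} [Zero R] [Preorder R] {n : ℕ}
    (B : Matrix (Fin n) (Fin n) R) : Prop where
  diag_pos : ∀ i, 0 < B i i
  upper_nonneg : ∀ i j, i < j → 0 ≤ B i j
  subdiag_nonpos : ∀ i j : Fin n, (i : ℕ) = j + 1 → B i j ≤ 0
  lower_eq_zero : ∀ i j : Fin n, (j : ℕ) + 1 < i → B i j = 0

namespace IsSignedHessenberg

variable {R : Type*} [Field R] [LinearOrder R] {n : ℕ}

def eliminate (B : Matrix (Fin (n + 2)) (Fin (n + 2)) R) : Matrix (Fin (n + 2)) (Fin (n + 2)) R :=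
  B.updateRow 1 (B 1 + (-B 1 0 / B 0 0) • B 0)

variable {B : Matrix (Fin (n + 2)) (Fin (n + 2)) R}

lemma eliminate_succ_zero (hB : B.IsSignedHessenberg) (i : Fin (n + 1)) :
    eliminate B i.succ 0 = 0 := by
  cases i using Fin.cases with
  | zero =>
    rw [eliminate, Fin.succ_zero_eq_one, updateRow_self, Pi.add_apply, Pi.smul_apply,
      smul_eq_mul, div_mul_cancel₀ _ (hB.diag_pos 0).ne', add_neg_cancel]
  | succ i =>
    rw [eliminate, updateRow_ne (Fin.succ_succ_ne_one i)]
    exact hB.lower_eq_zero _ _ (by simp)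

lemma submatrix_eliminate [IsStrictOrderedRing R] (hB : B.IsSignedHessenberg) :
    ((eliminate B).submatrix Fin.succ Fin.succ).IsSignedHessenberg := by
  have hc : 0 ≤ -B 1 0 / B 0 0 :=
    div_nonneg (neg_nonneg.mpr (hB.subdiag_nonpos 1 0 rfl)) (hB.diag_pos 0).le
  have row_zero : ∀ j : Fin (n + 1), (eliminate B).submatrix Fin.succ Fin.succ 0 j =
      B 1 j.succ + (-B 1 0 / B 0 0) * B 0 j.succ := by
    intro j; simp [eliminate]
  have row_succ : ∀ (i : Fin n) (j : Fin (n + 1)),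
      (eliminate B).submatrix Fin.succ Fin.succ i.succ j = B i.succ.succ j.succ := by
    intro i j; simp [eliminate, updateRow_ne (Fin.succ_succ_ne_one i)]
  refine ⟨fun i => ?_, fun i j hij => ?_, fun i j hij => ?_, fun i j hij => ?_⟩
  · cases i using Fin.cases with
    | zero =>
      rw [row_zero]
      have := hB.upper_nonneg 0 1 Fin.zero_lt_one
      have := hB.diag_pos 1
      positivity
    | succ i => rw [row_succ]; exact hB.diag_pos _
  · cases i using Fin.cases with
    | zero =>
      rw [row_zero]
      have := hB.upper_nonneg 1 j.succ (Fin.succ_lt_succ_iff.mpr hij)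
      have := hB.upper_nonneg 0 j.succ (Fin.succ_pos j)
      positivity
    | succ i => rw [row_succ]; exact hB.upper_nonneg _ _ (Fin.succ_lt_succ_iff.mpr hij)
  · cases i using Fin.cases with
    | zero => simp at hij
    | succ i =>
      rw [row_succ]
      exact hB.subdiag_nonpos _ _ (by simp only [Fin.val_succ] at hij ⊢; omega)
  · cases i using Fin.cases with
    | zero => simp at hij
    | succ i =>
      rw [row_succ]
      exact hB.lower_eq_zero _ _ (by simp only [Fin.val_succ] at hij ⊢; omega)

theorem det_pos [IsStrictOrderedRing R] :
    ∀ {n : ℕ} {B : Matrix (Fin n) (Fin n) R}, B.IsSignedHessenberg → 0 < B.det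
  | 0, _, _ => by simp
  | 1, B, hB => by simpa [det_fin_one] using hB.diag_pos 0
  | n + 2, B, hB => by
    have hdet : B.det = B 0 0 * ((eliminate B).submatrix Fin.succ Fin.succ).det := by
      rw [← det_updateRow_add_smul_self B Fin.zero_ne_one.symm (-B 1 0 / B 0 0),
        det_succ_column_zero, Fin.sum_univ_succ, sum_eq_zero fun i _ => by
          rw [show B.updateRow 1 (B 1 + (-B 1 0 / B 0 0) • B 0) = eliminate B from rfl,
            eliminate_succ_zero hB i, mul_zero, zero_mul]]
      simp [eliminate]
    rw [hdet]
    exact mul_pos (hB.diag_pos 0) (submatrix_eliminate hB).det_pos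

end IsSignedHessenberg

end Matrix

section Band

variable {R : Type*}

/-- Arrays are indexed by `ℤ` so that the boundary rows and columns of a product with a band
matrix need no separate case: the entries just outside the block only have to vanish. -/
def leadingBlock (ℓ : ℕ) (a : ℤ → ℤ → R) : Matrix (Fin ℓ) (Fin ℓ) R :=
  Matrix.of fun i j => a i j

def tridiag [Zero R] (lo di up : ℤ → R) (i k : ℤ) : R :=
  if k = i then di i else if k = i + 1 then up i else if i = k + 1 then lo k else 0

section tridiag

variable [Zero R] {lo di up : ℤ → R} {i k : ℤ}

lemma tridiag_of_eq (h : k = i) : tridiag lo di up i k = di i := by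
  simp [tridiag, h]

lemma tridiag_of_eq_add_one (h : k = i + 1) : tridiag lo di up i k = up i := by
  simp [tridiag, h]

lemma tridiag_of_add_one_eq (h : i = k + 1) : tridiag lo di up i k = lo k := by
  rw [tridiag, if_neg (by omega), if_neg (by omega), if_pos h]

lemma tridiag_of_notMem (h : k ∉ Icc (i - 1) (i + 1)) : tridiag lo di up i k = 0 := by
  rw [mem_Icc] at h
  rw [tridiag, if_neg (by omega), if_neg (by omega), if_neg (by omega)]

end tridiag

lemma sum_fin_eq_of_support_Icc [AddCommMonoid R] {ℓ : ℕ} (f : ℤ → R) {c : ℤ} (hc : 0 ≤ c)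
    (hcℓ : c < ℓ) (hf : ∀ k ∉ Icc (c - 1) (c + 1), f k = 0) (hbot : f (-1) = 0)
    (htop : f ℓ = 0) :
    ∑ k : Fin ℓ, f k = f (c - 1) + f c + f (c + 1) := by
  let e : Fin ℓ ↪ ℤ := Fin.valEmbedding.trans Nat.castEmbedding
  have he : ∀ a : Fin ℓ, e a = ((a : ℕ) : ℤ) := fun _ => rfl
  have hsub : univ.map e ⊆ Icc (-1) ℓ := by
    intro k hk
    obtain ⟨a, -, rfl⟩ := mem_map.mp hk
    rw [mem_Icc, he]
    omega
  have hband : Icc (c - 1) (c + 1) = {c - 1, c, c + 1} := by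
    ext k; simp only [mem_Icc, mem_insert, mem_singleton]; omega
  calc ∑ k : Fin ℓ, f k = ∑ k ∈ univ.map e, f k := by rw [sum_map]; rfl
    _ = ∑ k ∈ Icc (-1 : ℤ) ℓ, f k := by
      refine sum_subset hsub fun k hk hke => ?_
      rw [mem_Icc] at hk
      rcases eq_or_ne k (-1) with rfl | h1
      · exact hbot
      rcases eq_or_ne k ℓ with rfl | h2
      · exact htop
      exact absurd
        (mem_map.mpr ⟨⟨k.toNat, by omega⟩, mem_univ _, Int.toNat_of_nonneg (by omega)⟩) hke
    _ = ∑ k ∈ Icc (c - 1) (c + 1), f k :=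
      (sum_subset (Icc_subset_Icc (by omega : (-1 : ℤ) ≤ c - 1) (by omega : c + 1 ≤ ℓ))
        fun k _ hk => hf k hk).symm
    _ = f (c - 1) + f c + f (c + 1) := by
      rw [hband, sum_insert (by simp only [mem_insert, mem_singleton]; omega),
        sum_pair (by omega), add_assoc]

variable [NonUnitalNonAssocSemiring R] {ℓ : ℕ}

lemma leadingBlock_tridiag_mul_apply (lo di up : ℤ → R) (b : ℤ → ℤ → R) (hlo : lo (-1) = 0)
    (hb : ∀ j : Fin ℓ, b ℓ j = 0) (i j : Fin ℓ) :
    (leadingBlock ℓ (tridiag lo di up) * leadingBlock ℓ b) i j =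
      lo (i - 1) * b (i - 1) j + di i * b i j + up i * b (i + 1) j := by
  simp only [mul_apply, leadingBlock, of_apply]
  rw [sum_fin_eq_of_support_Icc (fun k => tridiag lo di up i k * b k j) (c := i) (by omega)
    (by omega)]
  · rw [tridiag_of_add_one_eq (by ring), tridiag_of_eq rfl, tridiag_of_eq_add_one rfl]
  · intro k hk
    rw [tridiag_of_notMem hk, zero_mul]
  · by_cases hi : ((i : ℕ) : ℤ) = 0
    · rw [tridiag_of_add_one_eq (by omega), hlo, zero_mul]
    · rw [tridiag_of_notMem (by rw [mem_Icc]; omega), zero_mul]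
  · rw [hb, mul_zero]

lemma leadingBlock_mul_tridiag_apply (a : ℤ → ℤ → R) (lo di up : ℤ → R)
    (ha : ∀ i : Fin ℓ, a i (-1) = 0) (hlo : lo (ℓ - 1) = 0) (i j : Fin ℓ) :
    (leadingBlock ℓ a * leadingBlock ℓ (tridiag lo di up)) i j =
      a i (j - 1) * up (j - 1) + a i j * di j + a i (j + 1) * lo j := by
  simp only [mul_apply, leadingBlock, of_apply]
  rw [sum_fin_eq_of_support_Icc (fun k => a i k * tridiag lo di up k j) (c := j) (by omega)
    (by omega)]
  · rw [tridiag_of_eq_add_one (by ring), tridiag_of_eq rfl, tridiag_of_add_one_eq rfl]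
  · intro k hk
    rw [mem_Icc] at hk
    rw [tridiag_of_notMem (by rw [mem_Icc]; omega), mul_zero]
  · rw [ha, zero_mul]
  · by_cases hj : ((j : ℕ) : ℤ) = ℓ - 1
    · rw [tridiag_of_add_one_eq (by omega), hj, hlo, mul_zero]
    · rw [tridiag_of_notMem (by rw [mem_Icc]; omega), mul_zero]

end Band

noncomputable def invFact (d : ℤ) : ℝ := if 0 ≤ d then (d.toNat.factorial : ℝ)⁻¹ else 0

lemma invFact_eq_mul_invFact_add_one (d : ℤ) : invFact d = ((d : ℝ) + 1) * invFact (d + 1) := by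
  rcases lt_trichotomy d (-1) with h | rfl | h
  · rw [invFact, invFact, if_neg (by omega), if_neg (by omega), mul_zero]
  · simp [invFact]
  · lift d to ℕ using (by omega)
    rw [invFact, invFact, if_pos (by omega), if_pos (by omega), show (d : ℤ) + 1 = (d + 1 : ℕ) by
      push_cast; ring, Int.toNat_natCast, Int.toNat_natCast, Nat.factorial_succ]
    push_cast
    field_simp

noncomputable def expShift (ℓ : ℕ) : Matrix (Fin ℓ) (Fin ℓ) ℝ :=
  leadingBlock ℓ fun i j => invFact (j - i)

lemma det_expShift (ℓ : ℕ) : (expShift ℓ).det = 1 := by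
  rw [det_of_isUpperTriangular fun i j (h : j < i) => ?_]
  · exact prod_eq_one fun i _ => by simp [expShift, leadingBlock, invFact]
  · simp only [expShift, leadingBlock, of_apply, invFact]
    rw [if_neg (by rw [Fin.lt_def] at h; omega)]

noncomputable def invProd (N : ℕ) (i j : ℤ) : ℝ :=
  if i ≤ j then ∏ k ∈ Icc i j, ((N : ℝ) + 1 + k)⁻¹ else 0

section invProd

variable {N : ℕ} {i j : ℤ}

lemma invProd_pos (hi : 0 ≤ i) (hij : i ≤ j) : 0 < invProd N i j := by
  rw [invProd, if_pos hij]
  exact prod_pos fun k hk => by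
    have : (0 : ℝ) ≤ k := by exact_mod_cast hi.trans (mem_Icc.mp hk).1
    positivity

lemma invProd_of_lt (h : j < i) : invProd N i j = 0 := if_neg (by omega)

lemma add_mul_invProd (hi : 0 ≤ i) :
    ((N : ℝ) + 1 + i) * invProd N i j = invProd N (i + 1) j + if i = j then 1 else 0 := by
  rcases lt_or_ge j i with h | h
  · rw [invProd_of_lt h, invProd_of_lt (by omega), if_neg (by omega), mul_zero, zero_add]
  · have hN : (N : ℝ) + 1 + i ≠ 0 := by
      have : (0 : ℝ) ≤ i := by exact_mod_cast hi
      positivity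
    rw [invProd, if_pos h, ← insert_Icc_add_one_left_eq_Icc h, prod_insert (by simp),
      ← mul_assoc, mul_inv_cancel₀ hN, one_mul]
    rcases h.eq_or_lt with rfl | h
    · simp [invProd_of_lt]
    · rw [invProd, if_pos (by omega), if_neg h.ne, add_zero]

end invProd

section Factorization

variable (N ℓ : ℕ) (x y : ℝ)

def subdiagEntry (k : ℤ) : ℝ := -((N + k + 2) * (k + 1) * (ℓ - k - 1))

lemma Mmat_eq_leadingBlock : Mmat N ℓ x = leadingBlock ℓ (tridiag (subdiagEntry N ℓ)
    (fun i => (N + i + 1) * (x - ℓ + 2 * i + 1)) fun i => N + i + 1) := by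
  ext i j
  simp only [Mmat, leadingBlock, of_apply, tridiag, subdiagEntry]
  split_ifs <;> first | omega | (push_cast; ring)

def MmatConj : Matrix (Fin ℓ) (Fin ℓ) ℝ := leadingBlock ℓ
  (tridiag (subdiagEntry N ℓ) (fun i => (N + 1 + i) * x + (i + 1) * (ℓ - 1 - i)) fun _ => -x)

lemma Mmat_mul_expShift : Mmat N ℓ x * expShift ℓ = expShift ℓ * MmatConj N ℓ x := by
  ext i j
  have hsub : subdiagEntry N ℓ (-1) = 0 := by simp [subdiagEntry]
  have hsub' : subdiagEntry N ℓ (ℓ - 1) = 0 := by simp [subdiagEntry]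
  rw [Mmat_eq_leadingBlock, expShift, MmatConj, leadingBlock_tridiag_mul_apply _ _ _ _ hsub
    fun j => ?_, leadingBlock_mul_tridiag_apply _ _ _ _ (fun i => ?_) hsub']
  · -- With `u = invFact (J - I + 1)`, the three weights of either side are `u`,
    -- `(J - I + 1) * u` and `(J - I) * (J - I + 1) * u`; what is left is a polynomial identity.
    generalize ((i : ℕ) : ℤ) = I
    generalize ((j : ℕ) : ℤ) = J
    rw [show J - (I - 1) = J - I + 1 by ring, show J - (I + 1) = J - I - 1 by ring,
      show J - 1 - I = J - I - 1 by ring, show J + 1 - I = J - I + 1 by ring,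
      invFact_eq_mul_invFact_add_one (J - I - 1), sub_add_cancel,
      invFact_eq_mul_invFact_add_one (J - I)]
    simp only [subdiagEntry]
    push_cast
    ring
  · rw [invFact, if_neg (by omega)]
  · rw [invFact, if_neg (by omega)]

lemma det_smul_one_add_Mmat : (y • 1 + Mmat N ℓ x).det = (y • 1 + MmatConj N ℓ x).det := by
  have h := congrArg det (show (y • 1 + Mmat N ℓ x) * expShift ℓ =
      expShift ℓ * (y • 1 + MmatConj N ℓ x) by
    rw [add_mul, mul_add, Matrix.smul_mul, Matrix.mul_smul, one_mul, mul_one, Mmat_mul_expShift])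
  rwa [det_mul, det_mul, det_expShift, mul_one, one_mul] at h

def Tmat : Matrix (Fin ℓ) (Fin ℓ) ℝ := leadingBlock ℓ (tridiag 0 (fun i => N + 1 + i) fun _ => -1)

noncomputable def TmatInv : Matrix (Fin ℓ) (Fin ℓ) ℝ := leadingBlock ℓ (invProd N)

lemma Tmat_mul_TmatInv : Tmat N ℓ * TmatInv N ℓ = 1 := by
  ext i j
  rw [Tmat, TmatInv, leadingBlock_tridiag_mul_apply _ _ _ _ rfl
    fun j => invProd_of_lt (by omega), one_apply, Pi.zero_apply, zero_mul, zero_add,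
    add_mul_invProd (by omega)]
  simp only [Fin.ext_iff, ← Nat.cast_inj (R := ℤ)]
  ring

def Lmat : Matrix (Fin ℓ) (Fin ℓ) ℝ :=
  leadingBlock ℓ (tridiag (fun k => (k + 1) * (k + 1 - ℓ)) (fun _ => x) 0)

lemma Tmat_mul_Lmat : Tmat N ℓ * Lmat ℓ x = MmatConj N ℓ x := by
  ext i j
  rw [Tmat, Lmat, leadingBlock_tridiag_mul_apply _ _ _ _ rfl fun j => ?_, MmatConj]
  · simp only [leadingBlock, of_apply, tridiag, subdiagEntry, Pi.zero_apply]
    generalize ((i : ℕ) : ℤ) = I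
    generalize ((j : ℕ) : ℤ) = J
    split_ifs <;> first | omega | (subst_vars; push_cast; ring)
  · by_cases hj : ((j : ℕ) : ℤ) = ℓ - 1
    · rw [tridiag_of_add_one_eq (by omega), hj]
      push_cast
      ring
    · exact tridiag_of_notMem (by rw [mem_Icc]; omega)

noncomputable def Bmat : Matrix (Fin ℓ) (Fin ℓ) ℝ := Lmat ℓ x + y • TmatInv N ℓ

lemma Tmat_mul_Bmat : Tmat N ℓ * Bmat N ℓ x y = y • 1 + MmatConj N ℓ x := by
  rw [Bmat, mul_add, Matrix.mul_smul, Tmat_mul_TmatInv, Tmat_mul_Lmat, add_comm]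

lemma Bmat_apply (i j : Fin ℓ) :
    Bmat N ℓ x y i j =
      tridiag (fun k : ℤ => (k + 1) * (k + 1 - (ℓ : ℝ))) (fun _ => x) 0 i j + y * invProd N i j :=
  rfl

end Factorization

lemma det_Tmat_pos (N ℓ : ℕ) : 0 < (Tmat N ℓ).det := by
  rw [det_of_isUpperTriangular fun i j (h : j < i) => ?_]
  · refine prod_pos fun i _ => ?_
    rw [Tmat, leadingBlock, of_apply, tridiag_of_eq rfl]
    positivity
  · rw [Fin.lt_def] at h
    rw [Tmat, leadingBlock, of_apply, tridiag]
    split_ifs <;> first | omega | rfl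

lemma Bmat_isSignedHessenberg (N ℓ : ℕ) {x y : ℝ} (hx : 0 < x) (hy : 0 ≤ y) :
    (Bmat N ℓ x y).IsSignedHessenberg where
  diag_pos i := by
    rw [Bmat_apply, tridiag_of_eq rfl]
    have := invProd_pos (N := N) (by omega : (0 : ℤ) ≤ (i : ℕ)) le_rfl
    positivity
  upper_nonneg i j h := by
    rw [Fin.lt_def] at h
    have := invProd_pos (N := N) (by omega : (0 : ℤ) ≤ (i : ℕ)) (by omega : ((i : ℕ) : ℤ) ≤ (j : ℕ))
    rw [Bmat_apply, tridiag]
    split_ifs <;> first | omega | (simp only [Pi.zero_apply, zero_add]; positivity)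
  subdiag_nonpos i j h := by
    rw [Bmat_apply, tridiag_of_add_one_eq (by omega), invProd_of_lt (by omega), mul_zero, add_zero]
    have : (((j : ℕ) : ℤ) : ℝ) + 1 ≤ ℓ := by exact_mod_cast (show (j : ℕ) + 1 ≤ ℓ by omega)
    exact mul_nonpos_of_nonneg_of_nonpos (by positivity) (by linarith)
  lower_eq_zero i j h := by
    rw [Bmat_apply, tridiag_of_notMem (by rw [mem_Icc]; omega), invProd_of_lt (by omega), mul_zero,
      add_zero]

/-- `A_N^ℓ(x,y) > 0` for all `x, y > 0`. -/
theorem APoly_pos (N ℓ : ℕ) (x y : ℝ) (hx : 0 < x) (hy : 0 < y) :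
    0 < APoly N ℓ x y := by
  rw [APoly, det_smul_one_add_Mmat, ← Tmat_mul_Bmat, det_mul]
  exact mul_pos (det_Tmat_pos N ℓ) (Bmat_isSignedHessenberg N ℓ hx hy.le).det_pos
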